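/- Let M and N be commuting normal contractions on a Hilbert space H. Define operators on H ⊕ H by U' = [[M, (1 − MM*)^{1/2}],[(1 − M*M)^{1/2}, −M*]] and V' = [[N, 0],[0, N]]. Then U' is unitary, U' and V' commute, V' is a normal contraction, and the compression of (U', V') to the first copy of H equals (M, N). -/

import Mathlib

/-! Since `M` is normal, `1 - M M*` and `1 - M* M` coincide, so `S = T` by uniqueness of positive
square roots. Being a continuous function of `1 - M M*`, `S` commutes with every operator that
commutes with `M` and `M*`: with `M` and `M*` themselves, and, by Fuglede's theorem, with `N`.
These commutations are all that the block computations `U'* U' = U' U'* = 1` and `U' V' = V' U'`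
need. -/

open ContinuousLinearMap

/-- The block operator `[[a, b],[c, d]]` on the Hilbert space `H ⊕ H`. -/
noncomputable def blockOp {H : Type*} [NormedAddCommGroup H] [InnerProductSpace ℂ H]
    (a b c d : H →L[ℂ] H) : WithLp 2 (H × H) →L[ℂ] WithLp 2 (H × H) :=
  ((WithLp.prodContinuousLinearEquiv 2 ℂ H H).symm : (H × H) →L[ℂ] WithLp 2 (H × H)) ∘L
    ((a ∘L fst ℂ H H + b ∘L snd ℂ H H).prod (c ∘L fst ℂ H H + d ∘L snd ℂ H H)) ∘L
    ((WithLp.prodContinuousLinearEquiv 2 ℂ H H) : WithLp 2 (H × H) →L[ℂ] (H × H))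

lemma commute_of_commute_mul_self {A : Type*} [NonUnitalCStarAlgebra A] [PartialOrder A]
    [StarOrderedRing A] {b s : A} (hs : 0 ≤ s) (h : Commute b (s * s)) : Commute b s := by
  rw [← CFC.sqrt_mul_self s hs]
  exact (h.symm.cfcₙ_nnreal NNReal.sqrt).symm

section BlockOp

variable {H : Type*} [NormedAddCommGroup H] [InnerProductSpace ℂ H]

@[simp]
lemma blockOp_apply_fst (a b c d : H →L[ℂ] H) (v : WithLp 2 (H × H)) :
    (blockOp a b c d v).fst = a v.fst + b v.snd :=
  rfl

@[simp]
lemma blockOp_apply_snd (a b c d : H →L[ℂ] H) (v : WithLp 2 (H × H)) :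
    (blockOp a b c d v).snd = c v.fst + d v.snd :=
  rfl

lemma continuousLinearMap_prodL2_ext {f g : WithLp 2 (H × H) →L[ℂ] WithLp 2 (H × H)}
    (h : ∀ v, (f v).fst = (g v).fst ∧ (f v).snd = (g v).snd) : f = g := by
  ext v : 1
  rw [WithLp.ext_iff]
  exact Prod.ext (h v).1 (h v).2

lemma blockOp_mul (a b c d a' b' c' d' : H →L[ℂ] H) :
    blockOp a b c d * blockOp a' b' c' d'
      = blockOp (a * a' + b * c') (a * b' + b * d') (c * a' + d * c') (c * b' + d * d') := by
  refine continuousLinearMap_prodL2_ext fun v => ?_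
  simp only [mul_apply_eq_comp, blockOp_apply_fst, blockOp_apply_snd, add_apply, map_add]
  constructor <;> abel

lemma blockOp_one : blockOp (1 : H →L[ℂ] H) 0 0 1 = 1 := by
  refine continuousLinearMap_prodL2_ext fun v => ?_
  simp

lemma blockOp_diag_commute {a b c d n : H →L[ℂ] H} (ha : Commute a n) (hb : Commute b n)
    (hc : Commute c n) (hd : Commute d n) :
    Commute (blockOp a b c d) (blockOp n 0 0 n) := by
  simp only [Commute, SemiconjBy, blockOp_mul, mul_zero, zero_mul, add_zero, zero_add,
    ha.eq, hb.eq, hc.eq, hd.eq]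

lemma norm_blockOp_diag_le (n : H →L[ℂ] H) : ‖blockOp n 0 0 n‖ ≤ ‖n‖ := by
  refine opNorm_le_bound _ (norm_nonneg n) fun v => ?_
  have hsq : ‖blockOp n 0 0 n v‖ ^ 2 ≤ (‖n‖ * ‖v‖) ^ 2 := by
    rw [mul_pow, WithLp.prod_norm_sq_eq_of_L2, WithLp.prod_norm_sq_eq_of_L2 v, mul_add]
    simp only [blockOp_apply_fst, blockOp_apply_snd, zero_apply, add_zero, zero_add]
    gcongr <;> rw [← mul_pow] <;> gcongr <;> exact le_opNorm n _
  exact (pow_le_pow_iff_left₀ (norm_nonneg _) (by positivity) two_ne_zero).mp hsq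

variable [CompleteSpace H]

lemma star_blockOp (a b c d : H →L[ℂ] H) :
    star (blockOp a b c d) = blockOp (star a) (star c) (star b) (star d) := by
  symm
  rw [star_eq_adjoint (blockOp a b c d), eq_adjoint_iff]
  intro x y
  simp only [WithLp.prod_inner_apply, WithLp.ofLp_fst, WithLp.ofLp_snd, blockOp_apply_fst,
    blockOp_apply_snd, inner_add_left, inner_add_right, star_eq_adjoint, adjoint_inner_left]
  ring

lemma IsStarNormal.blockOp_diag {n : H →L[ℂ] H} (hn : IsStarNormal n) :
    IsStarNormal (blockOp n 0 0 n) := by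
  rw [isStarNormal_iff, star_blockOp, star_zero]
  exact blockOp_diag_commute hn.star_comm_self (.zero_left _) (.zero_left _) hn.star_comm_self

lemma blockOp_mem_unitary {m s : H →L[ℂ] H} (hm : IsStarNormal m) (hs : IsSelfAdjoint s)
    (hsm : Commute s m) (hsm' : Commute s (star m)) (hss : s * s = 1 - m * star m) :
    blockOp m s s (-star m) ∈ unitary (WithLp 2 (H × H) →L[ℂ] WithLp 2 (H × H)) := by
  have hss' : s * s = 1 - star m * m := by rw [hss, hm.star_comm_self.eq]
  rw [Unitary.mem_iff, star_blockOp, hs.star_eq, star_neg, star_star, blockOp_mul, blockOp_mul,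
    ← blockOp_one]
  constructor <;> congr 1
  · rw [hss']; abel
  · rw [mul_neg, hsm'.eq, add_neg_cancel]
  · rw [neg_mul, hsm.eq, add_neg_cancel]
  · rw [hss]; noncomm_ring
  · rw [hss]; abel
  · rw [mul_neg, hsm.eq, add_neg_cancel]
  · rw [neg_mul, hsm'.eq, add_neg_cancel]
  · rw [hss']; noncomm_ring

end BlockOp

theorem stmt_8_general {H : Type*} [NormedAddCommGroup H] [InnerProductSpace ℂ H] [CompleteSpace H]
    (M N S T : H →L[ℂ] H)
    (hM : IsStarNormal M) (hN : IsStarNormal N) (hMN : M * N = N * M)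
    (hNc : ‖N‖ ≤ 1)
    (hS : S.IsPositive) (hSsq : S * S = 1 - M * adjoint M)
    (hT : T.IsPositive) (hTsq : T * T = 1 - adjoint M * M) :
    blockOp M S T (-adjoint M) ∈ unitary (WithLp 2 (H × H) →L[ℂ] WithLp 2 (H × H)) ∧
    blockOp M S T (-adjoint M) * blockOp N 0 0 N
      = blockOp N 0 0 N * blockOp M S T (-adjoint M) ∧
    IsStarNormal (blockOp N 0 0 N) ∧ ‖blockOp N 0 0 N‖ ≤ 1 ∧
    (∀ x : H, ((WithLp.prodContinuousLinearEquiv 2 ℂ H H)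
        (blockOp M S T (-adjoint M)
          ((WithLp.prodContinuousLinearEquiv 2 ℂ H H).symm (x, 0)))).1 = M x) ∧
    (∀ x : H, ((WithLp.prodContinuousLinearEquiv 2 ℂ H H)
        (blockOp N 0 0 N
          ((WithLp.prodContinuousLinearEquiv 2 ℂ H H).symm (x, 0)))).1 = N x) := by
  simp only [← star_eq_adjoint] at hSsq hTsq ⊢
  have hS₀ : 0 ≤ S := (nonneg_iff_isPositive S).mpr hS
  obtain rfl : S = T := by
    rw [← CFC.sqrt_mul_self S hS₀, ← CFC.sqrt_mul_self T ((nonneg_iff_isPositive T).mpr hT),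
      hSsq, hTsq, hM.star_comm_self.eq]
  have hS_comm {X : H →L[ℂ] H} (hXM : Commute X M) (hXM' : Commute X (star M)) :
      Commute X S :=
    commute_of_commute_mul_self hS₀ <|
      hSsq ▸ (Commute.one_right X).sub_right (hXM.mul_right hXM')
  have hNM' : Commute N (star M) := hM.commute_star_right (Commute.symm hMN)
  have hSM : Commute S M := (hS_comm (.refl M) hM.star_comm_self.symm).symm
  have hSM' : Commute S (star M) := (hS_comm hM.star_comm_self (.refl _)).symm
  have hSN : Commute S N := (hS_comm (Commute.symm hMN) hNM').symm
  refine ⟨blockOp_mem_unitary hM hS.isSelfAdjoint hSM hSM' hSsq,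
    blockOp_diag_commute hMN hSN hSN hNM'.symm.neg_left,
    hN.blockOp_diag, (norm_blockOp_diag_le N).trans hNc, fun x => by simp, fun x => by simp⟩

/-- Let `M`, `N` be commuting normal contractions on `H` and let `S = (1 − MM*)^{1/2}`,
`T = (1 − M*M)^{1/2}` be the positive square roots. With `U' = [[M, S],[T, −M*]]` and
`V' = [[N, 0],[0, N]]` on `H ⊕ H`: `U'` is unitary, `U'` and `V'` commute, `V'` is a normal
contraction, and the compression of `(U', V')` to the first copy of `H` is `(M, N)`. -/
theorem stmt_8 {H : Type*} [NormedAddCommGroup H] [InnerProductSpace ℂ H] [CompleteSpace H]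
    (M N S T : H →L[ℂ] H)
    (hM : IsStarNormal M) (hN : IsStarNormal N) (hMN : M * N = N * M)
    (hMc : ‖M‖ ≤ 1) (hNc : ‖N‖ ≤ 1)
    (hS : S.IsPositive) (hSsq : S * S = 1 - M * adjoint M)
    (hT : T.IsPositive) (hTsq : T * T = 1 - adjoint M * M) :
    blockOp M S T (-adjoint M) ∈ unitary (WithLp 2 (H × H) →L[ℂ] WithLp 2 (H × H)) ∧
    blockOp M S T (-adjoint M) * blockOp N 0 0 N
      = blockOp N 0 0 N * blockOp M S T (-adjoint M) ∧
    IsStarNormal (blockOp N 0 0 N) ∧ ‖blockOp N 0 0 N‖ ≤ 1 ∧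
    (∀ x : H, ((WithLp.prodContinuousLinearEquiv 2 ℂ H H)
        (blockOp M S T (-adjoint M)
          ((WithLp.prodContinuousLinearEquiv 2 ℂ H H).symm (x, 0)))).1 = M x) ∧
    (∀ x : H, ((WithLp.prodContinuousLinearEquiv 2 ℂ H H)
        (blockOp N 0 0 N
          ((WithLp.prodContinuousLinearEquiv 2 ℂ H H).symm (x, 0)))).1 = N x) :=
  stmt_8_general M N S T hM hN hMN hNc hS hSsq hT hTsq
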